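/- Let K be a nontrivial abelian group. Then there exists a family ⟨φ_α : ω₁ × α → K | α < ω₁⟩ such that: (coherence modulo finitely many rows) for all α ≤ β < ω₁ the set {η < ω₁ : φ_α(η,ξ) ≠ φ_β(η,ξ) for some ξ < α} is finite; and (nontriviality) there is no function ψ : ω₁ × ω₁ → K such that for every α < ω₁ the set {η < ω₁ : ψ(η,ξ) ≠ φ_α(η,ξ) for some ξ < α} is finite. -/

import Mathlib

/-!
Choose maps `e_α : α + 1 → ℕ` (`α < ω₁`) that are finite-to-one and coherent (any two agree
off a finite set); they are built by transfinite recursion, diagonalising at stage `α` along an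
enumeration of the countable ordinal `α`. For `x ≠ y` in `K` put `φ_α(η, ξ) = x` when `η` is a
natural number below `e_α(ξ)` and `y` otherwise; coherence of `e` gives coherence of `φ`.

If `ψ` trivialised `φ`, then for each `α` the rows `n ≥ N_α` of `ψ` agree with `φ_α` below `α`.
Comparing `α` with `ξ + 1` on the row `max(N_α, N_{ξ+1}, e_{ξ+1}(ξ))` bounds `e_α(ξ)` by
`max(N_α, m(ξ))` with `m(ξ) = max(N_{ξ+1}, e_{ξ+1}(ξ))` independent of `α`. So the single map
`m` is finite-to-one below every countable ordinal, hence on all of `ω₁`, which is impossible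
because `ω₁` is uncountable.
-/

open Cardinal Ordinal Set

universe u v

section FiniteToOne

variable {ι β : Type*} {s t : Set ι} {g f : ι → ℕ}

def FiniteToOneOn (s : Set ι) (g : ι → ℕ) : Prop :=
  ∀ n, {i ∈ s | g i ≤ n}.Finite

def AlmostEqOn (s : Set ι) (g f : ι → β) : Prop :=
  {i ∈ s | g i ≠ f i}.Finite

theorem FiniteToOneOn.mono (h : FiniteToOneOn t g) (hst : s ⊆ t) : FiniteToOneOn s g :=
  fun n => (h n).subset fun _ hi => ⟨hst hi.1, hi.2⟩

theorem FiniteToOneOn.of_le_max {N : ℕ} (h : FiniteToOneOn s g) (hle : ∀ i ∈ s, g i ≤ max N (f i)) :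
    FiniteToOneOn s f :=
  fun n => (h (max N n)).subset fun i (hi : i ∈ s ∧ f i ≤ n) =>
    ⟨hi.1, (hle i hi.1).trans (max_le_max_left N hi.2)⟩

theorem FiniteToOneOn.countable (h : FiniteToOneOn s g) : s.Countable :=
  (countable_iUnion fun n => (h n).countable).mono fun i hi =>
    mem_iUnion.2 ⟨g i, show i ∈ s ∧ g i ≤ g i from ⟨hi, le_rfl⟩⟩

theorem AlmostEqOn.refl (s : Set ι) (g : ι → β) : AlmostEqOn s g g := by
  simp [AlmostEqOn]

theorem AlmostEqOn.symm {g f : ι → β} (h : AlmostEqOn s g f) : AlmostEqOn s f g := by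
  simpa only [AlmostEqOn, ne_comm] using h

theorem AlmostEqOn.mono {g f : ι → β} (h : AlmostEqOn t g f) (hst : s ⊆ t) : AlmostEqOn s g f :=
  h.subset fun _ hi => ⟨hst hi.1, hi.2⟩

end FiniteToOne

theorem countable_Iio_iff_lt_omega_one {α : Ordinal.{u}} : (Iio α).Countable ↔ α < ω₁ := by
  rw [← le_aleph0_iff_set_countable, Cardinal.mk_Iio_ordinal, lift_le_aleph0, ← lt_aleph_one_iff,
    ← lt_ord, ord_aleph]

theorem exists_lt_omega_one_subset_Iio {s : Set Ordinal.{u}} (hs : s.Countable)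
    (hs₁ : s ⊆ Iio ω₁) : ∃ α < ω₁, s ⊆ Iio α := by
  have : Countable s := hs.to_subtype
  have hlim : Order.IsSuccLimit (ω₁ : Ordinal.{u}) :=
    ord_aleph 1 ▸ isSuccLimit_ord (aleph0_le_aleph 1)
  refine ⟨Order.succ (⨆ ξ : s, (ξ : Ordinal)), hlim.succ_lt (iSup_lt_omega_one fun ξ => hs₁ ξ.2),
    fun ξ hξ => Order.lt_succ_iff.2 (Ordinal.le_iSup (fun ξ : s => (ξ : Ordinal)) ⟨ξ, hξ⟩)⟩

theorem finiteToOneOn_Iio_omega_one {g : Ordinal.{u} → ℕ}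
    (h : ∀ α < ω₁, FiniteToOneOn (Iio α) g) : FiniteToOneOn (Iio ω₁) g := by
  intro n
  by_contra hinf
  obtain ⟨t, hts, htc, hti⟩ := Infinite.exists_subset_countable_infinite hinf
  obtain ⟨α, hα, htα⟩ := exists_lt_omega_one_subset_Iio htc fun ξ hξ => (hts hξ).1
  exact hti ((h α hα n).subset fun ξ hξ => ⟨htα hξ, (hts hξ).2⟩)

theorem not_forall_finiteToOneOn_Iio (g : Ordinal.{u} → ℕ) :
    ¬ ∀ α < ω₁, FiniteToOneOn (Iio α) g := fun h =>
  (countable_Iio_iff_lt_omega_one.1 (finiteToOneOn_Iio_omega_one h).countable).false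

theorem exists_finiteToOneOn_Iic_almostEqOn {α : Ordinal.{u}} (hα : (Iio α).Countable)
    (e : Ordinal.{u} → Ordinal.{u} → ℕ) (hfin : ∀ β < α, FiniteToOneOn (Iic β) (e β))
    (hcoh : ∀ β γ, β ≤ γ → γ < α → AlmostEqOn (Iic β) (e β) (e γ)) :
    ∃ g, FiniteToOneOn (Iic α) g ∧ ∀ β < α, AlmostEqOn (Iic β) (e β) g := by
  have hcoh' : ∀ β < α, ∀ γ < α, AlmostEqOn (Iic β ∩ Iic γ) (e β) (e γ) := by
    intro β hβ γ hγ
    rcases le_total β γ with h | h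
    · exact (hcoh β γ h hγ).mono inter_subset_left
    · exact (hcoh γ β h hβ).symm.mono inter_subset_right
  obtain ⟨f, hf⟩ := countable_iff_exists_subset_range.mp hα
  -- `g ξ = max (e (f n) ξ) n` for the least `n` with `ξ ≤ f n < α`: the `max` with `n` keeps `g`
  -- finite-to-one, and below `β = f K` only the finitely many `e (f n)`, `n ≤ K`, are used.
  let idx (ξ : Ordinal) : ℕ := sInf {n | ξ ≤ f n ∧ f n < α}
  have idx_le {ξ : Ordinal} {n : ℕ} (h₁ : ξ ≤ f n) (h₂ : f n < α) : idx ξ ≤ n :=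
    Nat.sInf_le ⟨h₁, h₂⟩
  have idx_spec {ξ : Ordinal} (hξ : ξ < α) : ξ ≤ f (idx ξ) ∧ f (idx ξ) < α := by
    obtain ⟨n, hn⟩ := hf hξ
    exact Nat.sInf_mem (s := {n | ξ ≤ f n ∧ f n < α}) ⟨n, hn.ge, hn ▸ hξ⟩
  refine ⟨fun ξ => max (e (f (idx ξ)) ξ) (idx ξ), fun k => ?_, fun β hβ => ?_⟩
  · have hfin_k : {m | m ≤ k ∧ f m < α}.Finite := (finite_Iic k).subset fun m hm => hm.1
    refine ((finite_singleton α).union (hfin_k.biUnion fun m hm => hfin (f m) hm.2 k)).subset ?_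
    rintro ξ ⟨hξα, hξk⟩
    rcases (mem_Iic.1 hξα).lt_or_eq with hξα | rfl
    · obtain ⟨hle, hlt⟩ := idx_spec hξα
      rw [max_le_iff] at hξk
      exact Or.inr (mem_biUnion ⟨hξk.2, hlt⟩ ⟨hle, hξk.1⟩)
    · exact Or.inl rfl
  · obtain ⟨K, hK⟩ := hf hβ
    have hfin_K : {m | m ≤ K ∧ f m < α}.Finite := (finite_Iic K).subset fun m hm => hm.1
    refine (hfin_K.biUnion fun m hm =>
      (hcoh' β hβ (f m) hm.2).union (hfin (f m) hm.2 K)).subset ?_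
    rintro ξ ⟨hξβ, hne⟩
    obtain ⟨hle, hlt⟩ := idx_spec (hξβ.trans_lt hβ)
    have hidx : idx ξ ≤ K := idx_le (hK ▸ hξβ) (hK ▸ hβ)
    refine mem_biUnion ⟨hidx, hlt⟩ ?_
    by_cases heq : e β ξ = e (f (idx ξ)) ξ
    · refine Or.inr ⟨hle, ?_⟩
      by_contra! h
      exact hne (heq.trans (max_eq_left (hidx.trans h.le)).symm)
    · exact Or.inl ⟨⟨hξβ, hle⟩, heq⟩

open Classical in
noncomputable def coherentSeq : Ordinal.{u} → Ordinal.{u} → ℕ :=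
  WellFoundedLT.fix fun α prev =>
    if h : ∃ g, FiniteToOneOn (Iic α) g ∧ ∀ β (hβ : β < α), AlmostEqOn (Iic β) (prev β hβ) g
    then h.choose else fun _ => 0

theorem coherentSeq_spec {α : Ordinal.{u}} (hα : α < ω₁) :
    FiniteToOneOn (Iic α) (coherentSeq α) ∧
      ∀ β ≤ α, AlmostEqOn (Iic β) (coherentSeq β) (coherentSeq α) := by
  induction α using WellFoundedLT.induction with
  | _ α IH =>
  have hex := exists_finiteToOneOn_Iic_almostEqOn (countable_Iio_iff_lt_omega_one.2 hα) coherentSeq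
    (fun β hβ => (IH β hβ (hβ.trans hα)).1) (fun β γ hβγ hγ => (IH γ hγ (hγ.trans hα)).2 β hβγ)
  have hα_eq : coherentSeq α = hex.choose := (WellFoundedLT.fix_eq _ α).trans (dif_pos hex)
  refine ⟨hα_eq ▸ hex.choose_spec.1, fun β hβ => ?_⟩
  rcases hβ.lt_or_eq with hβ | rfl
  · exact hα_eq ▸ hex.choose_spec.2 β hβ
  · exact AlmostEqOn.refl _ _

section Rows

variable {K : Type*}

theorem finite_Iio_natCast (n : ℕ) : (Iio (n : Ordinal.{v})).Finite :=
  natCast_image_Iio n ▸ (finite_Iio n).image _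

theorem natCast_lt_omega_one (n : ℕ) : (n : Ordinal.{v}) < ω₁ :=
  (natCast_lt_omega0 n).trans omega0_lt_omega_one

theorem exists_forall_natCast_notMem {S : Set Ordinal.{v}} (hS : S.Finite) :
    ∃ N : ℕ, ∀ n ≥ N, (n : Ordinal) ∉ S := by
  obtain ⟨M, hM⟩ := (hS.preimage Nat.cast_injective.injOn).bddAbove
  exact ⟨M + 1, fun n hn hnS => by have := hM hnS; omega⟩

theorem lt_max_of_ite_lt_natCast_ne {x y : K} {m n : ℕ} {η : Ordinal.{v}}
    (h : (if η < m then x else y) ≠ (if η < n then x else y)) : η < (max m n : ℕ) := by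
  by_contra! hη
  rw [if_neg, if_neg] at h
  · exact h rfl
  all_goals exact not_lt.2 (le_trans (Nat.cast_le.2 (by omega)) hη)

theorem AlmostEqOn.finite_ite_lt_natCast_ne {ι : Type*} {s : Set ι} {g f : ι → ℕ}
    (h : AlmostEqOn s g f) (x y : K) :
    {η : Ordinal.{v} |
      ∃ ξ ∈ s, (if η < g ξ then x else y) ≠ (if η < f ξ then x else y)}.Finite := by
  refine (h.biUnion fun ξ _ => finite_Iio_natCast (max (g ξ) (f ξ))).subset ?_
  rintro η ⟨ξ, hξ, hne⟩
  exact mem_biUnion ⟨hξ, fun heq => hne (by rw [heq])⟩ (lt_max_of_ite_lt_natCast_ne hne)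

theorem not_exists_almostEq_ite_lt_natCast {e : Ordinal.{u} → Ordinal.{u} → ℕ}
    (he : ∀ α < ω₁, FiniteToOneOn (Iio α) (e α)) {x y : K} (hxy : x ≠ y) :
    ¬ ∃ ψ : Ordinal.{v} → Ordinal.{u} → K, ∀ α < ω₁,
      {η : Ordinal.{v} | η < ω₁ ∧ ∃ ξ < α, ψ η ξ ≠ if η < e α ξ then x else y}.Finite := by
  rintro ⟨ψ, hψ⟩
  have : ∀ α, ∃ N : ℕ, α < ω₁ → ∀ n ≥ N, ∀ ξ < α,
      ψ n ξ = if (n : Ordinal.{v}) < e α ξ then x else y := by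
    intro α
    by_cases hα : α < ω₁
    · obtain ⟨N, hN⟩ := exists_forall_natCast_notMem (hψ α hα)
      exact ⟨N, fun _ n hn ξ hξ => by_contra fun h => hN n hn ⟨natCast_lt_omega_one n, ξ, hξ, h⟩⟩
    · exact ⟨0, fun h => absurd h hα⟩
  choose N hN using this
  refine not_forall_finiteToOneOn_Iio (fun ξ => max (N (ξ + 1)) (e (ξ + 1) ξ)) fun α hα =>
    (he α hα).of_le_max (N := N α) fun ξ hξ => ?_
  by_contra! hlt
  set n := max (N α) (max (N (ξ + 1)) (e (ξ + 1) ξ))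
  have hξ₁ : ξ + 1 < ω₁ := (Order.add_one_le_of_lt (mem_Iio.1 hξ)).trans_lt hα
  have hx : ψ n ξ = x := by
    rw [hN α hα n (le_max_left _ _) ξ hξ, if_pos]
    rwa [Nat.cast_lt]
  have hy : ψ n ξ = y := by
    rw [hN (ξ + 1) hξ₁ n (le_max_of_le_right (le_max_left _ _)) ξ (Order.lt_add_one_iff.2 le_rfl),
      if_neg]
    rw [not_lt, Nat.cast_le]
    exact le_max_of_le_right (le_max_right _ _)
  exact hxy (hx.symm.trans hy)

end Rows

theorem stmt_8_general (K : Type*) [Nontrivial K] :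
    ∃ φ : Ordinal → Ordinal → Ordinal → K,
      (∀ α β : Ordinal, α ≤ β → β < (aleph 1).ord →
        {η : Ordinal | η < (aleph 1).ord ∧ ∃ ξ < α, φ α η ξ ≠ φ β η ξ}.Finite) ∧
      ¬ ∃ ψ : Ordinal → Ordinal → K, ∀ α < (aleph 1).ord,
          {η : Ordinal | η < (aleph 1).ord ∧ ∃ ξ < α, ψ η ξ ≠ φ α η ξ}.Finite := by
  obtain ⟨x, y, hxy⟩ := exists_pair_ne K
  simp only [ord_aleph]
  refine ⟨fun α η ξ => if η < coherentSeq α ξ then x else y, fun α β hαβ hβ => ?_,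
    not_exists_almostEq_ite_lt_natCast
      (fun α hα => (coherentSeq_spec hα).1.mono Iio_subset_Iic_self) hxy⟩
  have hcoh : AlmostEqOn (Iio α) (coherentSeq α) (coherentSeq β) :=
    ((coherentSeq_spec hβ).2 α hαβ).mono Iio_subset_Iic_self
  exact (hcoh.finite_ite_lt_natCast_ne x y).subset fun η hη => hη.2

/-- Let `K` be a nontrivial abelian group.  Then there exists a family
`⟨φ_α : ω₁ × α → K | α < ω₁⟩` (represented as `φ : Ordinal → Ordinal → Ordinal → K`, where
`φ α η ξ` is of interest for `η < ω₁` and `ξ < α`) which is coherent modulo finitely many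
rows -- for `α ≤ β < ω₁` only finitely many rows `η < ω₁` contain a `ξ < α` with
`φ α η ξ ≠ φ β η ξ` -- but nontrivial: no `ψ : ω₁ × ω₁ → K` agrees with each `φ_α` off
finitely many rows. -/
theorem stmt_8 (K : Type*) [AddCommGroup K] [Nontrivial K] :
    ∃ φ : Ordinal → Ordinal → Ordinal → K,
      (∀ α β : Ordinal, α ≤ β → β < (aleph 1).ord →
        {η : Ordinal | η < (aleph 1).ord ∧ ∃ ξ < α, φ α η ξ ≠ φ β η ξ}.Finite) ∧
      ¬ ∃ ψ : Ordinal → Ordinal → K, ∀ α < (aleph 1).ord,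
          {η : Ordinal | η < (aleph 1).ord ∧ ∃ ξ < α, ψ η ξ ≠ φ α η ξ}.Finite :=
  stmt_8_general K
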